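/- Fix N ∈ ℕ, real numbers bₖ ≤ cₖ for 0 ≤ k ≤ N, and real numbers v_H ≥ 0 and v_E ≥ 0. In the Banach space ℓ¹(ℕ, ℝ) of absolutely summable real sequences, consider the set B of all f ∈ ℓ¹ admitting a decomposition f = p + h + e with p, h, e ∈ ℓ¹ such that: p(k) ∈ [bₖ, cₖ] for k ≤ N and p(k) = 0 for k > N; h(k) = 0 for k ≤ N and ‖h‖₁ ≤ v_H; and ‖e‖₁ ≤ v_E. Then B is a convex and closed subset of ℓ¹(ℕ, ℝ). -/

import Mathlib

/-!
The function ball is the Minkowski sum `P + H + E` of the box `P` of polynomial parts, the ball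
`H` of high-order parts and the closed ball `E` of radius `v_E`, so it is convex because the three
summands are. The box `P` is compact, since it lives in finitely many coordinates, hence it
suffices that `H + E` is closed. Truncation to the degrees `≤ N` is an L-projection `Q` of `ℓ¹`,
i.e. `‖f‖ = ‖Q f‖ + ‖f - Q f‖`, and for any L-projection
`(ker Q ∩ closedBall 0 a) + closedBall 0 b = closedBall 0 (a + b) ∩ {g | ‖Q g‖ ≤ b}`,
which is closed.
-/

open Set Metric
open scoped Pointwise ENNReal lp

theorem closedBall_zero_add_closedBall_zero {E : Type*} [SeminormedAddCommGroup E]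
    [NormedSpace ℝ E] {a b : ℝ} (ha : 0 ≤ a) (hb : 0 ≤ b) :
    closedBall (0 : E) a + closedBall 0 b = closedBall 0 (a + b) := by
  refine Subset.antisymm ?_ fun x hx => ?_
  · rintro _ ⟨x, hx, y, hy, rfl⟩
    rw [mem_closedBall_zero_iff] at *
    exact (norm_add_le x y).trans (add_le_add hx hy)
  rw [mem_closedBall_zero_iff] at hx
  rcases (add_nonneg ha hb).eq_or_lt with hab | hab
  · refine ⟨0, mem_closedBall_self ha, x, ?_, zero_add x⟩
    rw [mem_closedBall_zero_iff]
    linarith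
  have hscale : ∀ r, 0 ≤ r → ‖(r / (a + b)) • x‖ ≤ r := fun r hr => by
    rw [norm_smul, Real.norm_of_nonneg (by positivity)]
    calc r / (a + b) * ‖x‖ ≤ r / (a + b) * (a + b) := by gcongr
      _ = r := div_mul_cancel₀ r hab.ne'
  refine ⟨(a / (a + b)) • x, mem_closedBall_zero_iff.2 (hscale a ha),
    (b / (a + b)) • x, mem_closedBall_zero_iff.2 (hscale b hb), ?_⟩
  change (a / (a + b)) • x + (b / (a + b)) • x = x
  rw [← add_smul, ← add_div, div_self hab.ne', one_smul]

namespace IsLprojection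

variable {X M : Type*} [NormedAddCommGroup X] [Ring M] [Module M X] {P : M}

theorem norm_smul_le (hP : IsLprojection X P) (x : X) : ‖P • x‖ ≤ ‖x‖ := by
  rw [hP.Lnorm x]
  exact le_add_of_nonneg_right (norm_nonneg _)

theorem inter_closedBall_add_closedBall [NormedSpace ℝ X] (hP : IsLprojection X P) {a b : ℝ}
    (ha : 0 ≤ a) :
    {h : X | P • h = 0} ∩ closedBall 0 a + closedBall 0 b =
      closedBall 0 (a + b) ∩ {g | ‖P • g‖ ≤ b} := by
  refine Subset.antisymm ?_ fun g ⟨hg, hPg⟩ => ?_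
  · rintro _ ⟨h, ⟨hPh, hh⟩, e, he, rfl⟩
    rw [mem_closedBall_zero_iff] at hh he
    refine ⟨mem_closedBall_zero_iff.2 ((norm_add_le h e).trans (add_le_add hh he)), ?_⟩
    change ‖P • (h + e)‖ ≤ b
    rw [smul_add, hPh, zero_add]
    exact (hP.norm_smul_le e).trans he
  rw [mem_closedBall_zero_iff, hP.Lnorm g] at hg
  change ‖P • g‖ ≤ b at hPg
  -- the `P`-part of `g` goes to the error ball, its complement is split between the two balls
  obtain ⟨u, hu, w, hw, huw⟩ : (1 - P) • g ∈ closedBall (0 : X) a + closedBall 0 (b - ‖P • g‖) := by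
    rw [closedBall_zero_add_closedBall_zero ha (sub_nonneg.2 hPg), mem_closedBall_zero_iff]
    linarith
  rw [mem_closedBall_zero_iff] at hu hw
  refine ⟨(1 - P) • u, ⟨?_, ?_⟩, P • g + (1 - P) • w, ?_, ?_⟩
  · change P • (1 - P) • u = 0
    rw [smul_smul, mul_sub, mul_one, hP.proj.eq, sub_self, zero_smul]
  · exact mem_closedBall_zero_iff.2 ((hP.Lcomplement.norm_smul_le u).trans hu)
  · rw [mem_closedBall_zero_iff]
    calc ‖P • g + (1 - P) • w‖ ≤ ‖P • g‖ + ‖w‖ :=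
          (norm_add_le _ _).trans (by gcongr; exact hP.Lcomplement.norm_smul_le w)
      _ ≤ b := by linarith
  · calc (1 - P) • u + (P • g + (1 - P) • w) = P • g + (1 - P) • (1 - P) • g := by
          rw [← huw, smul_add]; abel
      _ = g := by rw [smul_smul, hP.Lcomplement.proj.eq, ← add_smul, add_sub_cancel, one_smul]

end IsLprojection

noncomputable section

namespace lp

variable {𝕜 α : Type*} {E : α → Type*} [∀ i, NormedAddCommGroup (E i)] [DecidableEq α]
  {p : ℝ≥0∞}

variable (p) in
def indicator (s : Finset α) (v : ∀ i, E i) : lp E p :=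
  ∑ i ∈ s, lp.single p i (v i)

theorem indicator_apply (s : Finset α) (v : ∀ i, E i) (j : α) :
    indicator p s v j = if j ∈ s then v j else 0 := by
  simp only [indicator, coeFn_sum, lp.coeFn_single, Finset.sum_apply, Finset.sum_pi_single]

theorem continuous_indicator [Fact (1 ≤ p)] (s : Finset α) :
    Continuous (indicator (E := E) p s) :=
  continuous_finsetSum s fun i _ => (isometry_single i).continuous.comp (continuous_apply i)

theorem isCompact_setOf_forall_mem [Fact (1 ≤ p)] {K : ∀ i, Set (E i)} (s : Finset α)
    (hK : ∀ i, IsCompact (K i)) (hs : ∀ i ∉ s, K i = {0}) :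
    IsCompact {f : lp E p | ∀ i, f i ∈ K i} := by
  have : {f : lp E p | ∀ i, f i ∈ K i} = indicator p s '' univ.pi K := by
    ext f
    constructor
    · refine fun hf => ⟨f, fun i _ => hf i, lp.ext (funext fun i => ?_)⟩
      rw [indicator_apply]
      split_ifs with hi
      · rfl
      · simpa [hs i hi, eq_comm] using hf i
    · rintro ⟨v, hv, rfl⟩ i
      rw [indicator_apply]
      split_ifs with hi
      · exact hv i (mem_univ i)
      · simp [hs i hi]
  rw [this]
  exact (isCompact_univ_pi hK).image (continuous_indicator s)

variable (𝕜) [NormedField 𝕜] [∀ i, NormedSpace 𝕜 (E i)]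

variable (p) in
def indicatorCLM [Fact (1 ≤ p)] (s : Finset α) : lp E p →L[𝕜] lp E p :=
  ∑ i ∈ s, (singleContinuousLinearMap 𝕜 E p i).comp (evalCLM 𝕜 E p i)

theorem indicatorCLM_apply [Fact (1 ≤ p)] (s : Finset α) (f : lp E p) :
    indicatorCLM 𝕜 p s f = indicator p s f := by
  simp [indicatorCLM, indicator, evalCLM]

theorem indicatorCLM_eq_zero_iff [Fact (1 ≤ p)] {s : Finset α} {f : lp E p} :
    indicatorCLM 𝕜 p s f = 0 ↔ ∀ i ∈ s, f i = 0 := by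
  simp only [indicatorCLM_apply, lp.ext_iff, funext_iff, indicator_apply, coeFn_zero,
    Pi.zero_apply, ite_eq_right_iff]

theorem isLprojection_indicatorCLM (s : Finset α) :
    IsLprojection (lp E 1) (indicatorCLM (E := E) 𝕜 1 s) where
  proj := by
    ext f i
    simp only [mul_apply_eq_comp, indicatorCLM_apply, indicator_apply]
    split_ifs <;> rfl
  Lnorm f := by
    have hsum := lp.norm_sum_single (p := 1) (by simp) f s
    have hcompl := lp.norm_compl_sum_single (p := 1) (by simp) f s
    simp only [ENNReal.toReal_one, Real.rpow_one] at hsum hcompl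
    simp only [sub_smul, one_smul, ContinuousLinearMap.smul_def, indicatorCLM_apply, indicator]
    linarith

end lp

end

namespace FunctionBall

def polyBox (N : ℕ) (b c : ℕ → ℝ) : Set ℓ¹(ℕ, ℝ) :=
  {p | (∀ k ≤ N, p k ∈ Icc (b k) (c k)) ∧ ∀ k > N, p k = 0}

def highOrderBall (N : ℕ) (vH : ℝ) : Set ℓ¹(ℕ, ℝ) :=
  {h | ∀ k ≤ N, h k = 0} ∩ closedBall 0 vH

def functionBall (N : ℕ) (b c : ℕ → ℝ) (vH vE : ℝ) : Set ℓ¹(ℕ, ℝ) :=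
  polyBox N b c + highOrderBall N vH + closedBall 0 vE

variable (N : ℕ) (b c : ℕ → ℝ) (vH vE : ℝ)

theorem functionBall_eq : functionBall N b c vH vE = {f : lp (fun _ : ℕ => ℝ) 1 |
        ∃ p h e : lp (fun _ : ℕ => ℝ) 1,
          f = p + h + e ∧
          (∀ k ≤ N, (p : ℕ → ℝ) k ∈ Set.Icc (b k) (c k)) ∧
          (∀ k > N, (p : ℕ → ℝ) k = 0) ∧
          (∀ k ≤ N, (h : ℕ → ℝ) k = 0) ∧ ‖h‖ ≤ vH ∧ ‖e‖ ≤ vE} := by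
  ext f
  simp only [functionBall, polyBox, highOrderBall, mem_add, mem_ofPred_eq, mem_inter_iff,
    mem_closedBall_zero_iff]
  constructor
  · rintro ⟨_, ⟨p, ⟨hpI, hp0⟩, h, ⟨hh0, hh⟩, rfl⟩, e, he, rfl⟩
    exact ⟨p, h, e, rfl, hpI, hp0, hh0, hh, he⟩
  · rintro ⟨p, h, e, rfl, hpI, hp0, hh0, hh, he⟩
    exact ⟨_, ⟨p, ⟨hpI, hp0⟩, h, ⟨hh0, hh⟩, rfl⟩, e, he, rfl⟩

theorem convex_polyBox : Convex ℝ (polyBox N b c) := by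
  rintro p ⟨hpI, hp0⟩ q ⟨hqI, hq0⟩ s t hs ht hst
  refine ⟨fun k hk => convex_Icc (b k) (c k) (hpI k hk) (hqI k hk) hs ht hst, fun k hk => ?_⟩
  change s * p k + t * q k = 0
  simp [hp0 k hk, hq0 k hk]

theorem convex_highOrderBall : Convex ℝ (highOrderBall N vH) := by
  refine Convex.inter ?_ (convex_closedBall 0 vH)
  rintro f hf g hg s t - - - k hk
  change s * f k + t * g k = 0
  simp [hf k hk, hg k hk]

theorem convex_functionBall : Convex ℝ (functionBall N b c vH vE) :=
  ((convex_polyBox N b c).add (convex_highOrderBall N vH)).add (convex_closedBall 0 vE)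

theorem isCompact_polyBox : IsCompact (polyBox N b c) := by
  have hbox : polyBox N b c =
      {p : ℓ¹(ℕ, ℝ) | ∀ k, p k ∈ if k ≤ N then Icc (b k) (c k) else {0}} := by
    ext p
    refine ⟨fun ⟨hpI, hp0⟩ k => ?_, fun hp => ⟨fun k hk => ?_, fun k hk => ?_⟩⟩
    · split_ifs with hk
      exacts [hpI k hk, hp0 k (not_le.1 hk)]
    · simpa [hk] using hp k
    · simpa [not_le.2 hk] using hp k
  rw [hbox]
  refine lp.isCompact_setOf_forall_mem (Finset.Iic N) (fun k => ?_) fun k hk => ?_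
  · split_ifs
    exacts [isCompact_Icc, isCompact_singleton]
  · simp [Finset.mem_Iic.not.1 hk]

theorem highOrderBall_add_closedBall (hvH : 0 ≤ vH) :
    highOrderBall N vH + closedBall 0 vE =
      closedBall 0 (vH + vE) ∩ {g | ‖lp.indicatorCLM ℝ 1 (Finset.Iic N) g‖ ≤ vE} := by
  have hP := lp.isLprojection_indicatorCLM (E := fun _ : ℕ => ℝ) ℝ (Finset.Iic N)
  simpa only [highOrderBall, ContinuousLinearMap.smul_def, lp.indicatorCLM_eq_zero_iff,
    Finset.mem_Iic]
    using hP.inter_closedBall_add_closedBall (b := vE) hvH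

theorem isClosed_functionBall (hvH : 0 ≤ vH) : IsClosed (functionBall N b c vH vE) := by
  rw [functionBall, add_assoc, highOrderBall_add_closedBall N vH vE hvH]
  refine IsClosed.add_left_of_isCompact ?_ (isCompact_polyBox N b c)
  exact isClosed_closedBall.inter
    (isClosed_le (continuous_norm.comp (ContinuousLinearMap.continuous _)) continuous_const)

end FunctionBall

theorem function_ball_convex_closed_general
    (N : ℕ) (b c : ℕ → ℝ)
    (vH vE : ℝ) (hvH : 0 ≤ vH) :
    Convex ℝ {f : lp (fun _ : ℕ => ℝ) 1 |
        ∃ p h e : lp (fun _ : ℕ => ℝ) 1,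
          f = p + h + e ∧
          (∀ k ≤ N, (p : ℕ → ℝ) k ∈ Set.Icc (b k) (c k)) ∧
          (∀ k > N, (p : ℕ → ℝ) k = 0) ∧
          (∀ k ≤ N, (h : ℕ → ℝ) k = 0) ∧ ‖h‖ ≤ vH ∧ ‖e‖ ≤ vE} ∧
    IsClosed {f : lp (fun _ : ℕ => ℝ) 1 |
        ∃ p h e : lp (fun _ : ℕ => ℝ) 1,
          f = p + h + e ∧
          (∀ k ≤ N, (p : ℕ → ℝ) k ∈ Set.Icc (b k) (c k)) ∧
          (∀ k > N, (p : ℕ → ℝ) k = 0) ∧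
          (∀ k ≤ N, (h : ℕ → ℝ) k = 0) ∧ ‖h‖ ≤ vH ∧ ‖e‖ ≤ vE} := by
  rw [← FunctionBall.functionBall_eq]
  exact ⟨FunctionBall.convex_functionBall N b c vH vE,
    FunctionBall.isClosed_functionBall N b c vH vE hvH⟩

/-- **Function balls are convex and closed.** In `ℓ¹(ℕ, ℝ)`, the standard function
ball — all `f = p + h + e` where the coefficients of the polynomial part `p` lie in
the intervals `[bₖ, cₖ]` (vanishing above degree `N`), the high-order part `h`
vanishes up to degree `N` with `‖h‖ ≤ v_H`, and the error part `e` has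
`‖e‖ ≤ v_E` — is convex and closed. -/
theorem function_ball_convex_closed
    (N : ℕ) (b c : ℕ → ℝ) (hbc : ∀ k ≤ N, b k ≤ c k)
    (vH vE : ℝ) (hvH : 0 ≤ vH) (hvE : 0 ≤ vE) :
    Convex ℝ {f : lp (fun _ : ℕ => ℝ) 1 |
        ∃ p h e : lp (fun _ : ℕ => ℝ) 1,
          f = p + h + e ∧
          (∀ k ≤ N, (p : ℕ → ℝ) k ∈ Set.Icc (b k) (c k)) ∧
          (∀ k > N, (p : ℕ → ℝ) k = 0) ∧
          (∀ k ≤ N, (h : ℕ → ℝ) k = 0) ∧ ‖h‖ ≤ vH ∧ ‖e‖ ≤ vE} ∧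
    IsClosed {f : lp (fun _ : ℕ => ℝ) 1 |
        ∃ p h e : lp (fun _ : ℕ => ℝ) 1,
          f = p + h + e ∧
          (∀ k ≤ N, (p : ℕ → ℝ) k ∈ Set.Icc (b k) (c k)) ∧
          (∀ k > N, (p : ℕ → ℝ) k = 0) ∧
          (∀ k ≤ N, (h : ℕ → ℝ) k = 0) ∧ ‖h‖ ≤ vH ∧ ‖e‖ ≤ vE} :=
  function_ball_convex_closed_general N b c vH vE hvH
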